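/- arXiv:math/0309439 — 2 statements merged into one kernel-verified Lean document; each statement's English description precedes it below -/
import Mathlib

section
/- Let (F,W) be a mixed Hodge structure on V and let g ∈ GL(V) satisfy either (i) g commutes with conjugation and g(W_k) = W_k for all k, or (ii) g = exp(λ) with λ ∈ Λ_{(F,W)}. Then (gF, W) is again a mixed Hodge structure (where (gF)^p = g(F^p)), and its Deligne bigrading satisfies I^{p,q}_{(gF,W)} = g(I^{p,q}_{(F,W)}) for all p, q. -/
open Complex

noncomputable section

/-- A conjugation (real structure) on a complex vector space: an additive,
conjugate-semilinear involution of `V`. -/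
structure Conjugation (V : Type*) [AddCommGroup V] [Module ℂ V] where
  toFun : V →ₛₗ[starRingEnd ℂ] V
  invol : ∀ v, toFun (toFun v) = v

namespace Conjugation

variable {V : Type*} [AddCommGroup V] [Module ℂ V]

/-- The image of a complex subspace under the conjugation; it is again a
complex subspace. -/
def submap (c : Conjugation V) (S : Submodule ℂ V) : Submodule ℂ V where
  carrier := c.toFun '' (S : Set V)
  add_mem' := by
    rintro _ _ ⟨x, hx, rfl⟩ ⟨y, hy, rfl⟩
    exact ⟨x + y, S.add_mem hx hy, map_add _ _ _⟩
  zero_mem' := ⟨0, S.zero_mem, map_zero _⟩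
  smul_mem' := by
    rintro a _ ⟨x, hx, rfl⟩
    refine ⟨(starRingEnd ℂ) a • x, S.smul_mem _ hx, ?_⟩
    rw [map_smulₛₗ, starRingEnd_self_apply]

end Conjugation

/-- `(F, W)` is a mixed Hodge structure on `V` relative to the conjugation `c`:
`F` is a finite decreasing filtration by complex subspaces, `W` is a finite
increasing filtration by real (conjugation-stable) subspaces, and `F` induces
on each graded piece `Gr^W_k = W_k / W_{k-1}` a pure Hodge structure of
weight `k`. -/
structure IsMHS {V : Type*} [AddCommGroup V] [Module ℂ V] (c : Conjugation V)
    (F W : ℤ → Submodule ℂ V) : Prop where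
  antitone_F : Antitone F
  exists_F_top : ∃ p, F p = ⊤
  exists_F_bot : ∃ p, F p = ⊥
  monotone_W : Monotone W
  exists_W_bot : ∃ k, W k = ⊥
  exists_W_top : ∃ k, W k = ⊤
  real_W : ∀ k, ∀ v ∈ W k, c.toFun v ∈ W k
  graded_sup : ∀ k p : ℤ,
    ((F p ⊓ W k).map (W (k-1)).mkQ) ⊔ ((c.submap (F (k - p + 1)) ⊓ W k).map (W (k-1)).mkQ)
      = (W k).map (W (k-1)).mkQ
  graded_inf : ∀ k p : ℤ,
    ((F p ⊓ W k).map (W (k-1)).mkQ) ⊓ ((c.submap (F (k - p + 1)) ⊓ W k).map (W (k-1)).mkQ)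
      = ⊥

/-- `I` is a Deligne bigrading for the pair of filtrations `(F, W)`:
`V = ⊕_{p,q} I^{p,q}`, `F^p = ⊕_{a ≥ p} I^{a,b}`, `W_k = ⊕_{a+b ≤ k} I^{a,b}`,
and `conj (I^{p,q}) ⊆ I^{q,p} + ⊕_{r<q,s<p} I^{r,s}`. -/
structure IsDeligneBigrading {V : Type*} [AddCommGroup V] [Module ℂ V] (c : Conjugation V)
    (F W : ℤ → Submodule ℂ V) (I : ℤ → ℤ → Submodule ℂ V) : Prop where
  internal : DirectSum.IsInternal (fun pq : ℤ × ℤ => I pq.1 pq.2)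
  hF : ∀ p : ℤ, F p = ⨆ pq : ℤ × ℤ, ⨆ _ : p ≤ pq.1, I pq.1 pq.2
  hW : ∀ k : ℤ, W k = ⨆ pq : ℤ × ℤ, ⨆ _ : pq.1 + pq.2 ≤ k, I pq.1 pq.2
  conj_cond : ∀ p q : ℤ, ∀ v ∈ I p q,
    c.toFun v ∈ I q p ⊔ ⨆ pq : ℤ × ℤ, ⨆ _ : pq.1 < q ∧ pq.2 < p, I pq.1 pq.2

/-- The bidegree-`(r,s)` part `gl^{r,s}` of `End(V)` induced by a bigrading `I` of `V`. -/
def glrs {V : Type*} [AddCommGroup V] [Module ℂ V]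
    (I : ℤ → ℤ → Submodule ℂ V) (r s : ℤ) : Submodule ℂ (Module.End ℂ V) where
  carrier := {α | ∀ p q : ℤ, ∀ v ∈ I p q, α v ∈ I (p + r) (q + s)}
  add_mem' := by
    intro α β hα hβ p q v hv
    simpa [LinearMap.add_apply] using
      Submodule.add_mem _ (hα p q v hv) (hβ p q v hv)
  zero_mem' := by
    intro p q v hv
    simp
  smul_mem' := by
    intro t α hα p q v hv
    simpa [LinearMap.smul_apply] using Submodule.smul_mem _ t (hα p q v hv)

/-- `Λ_{(F,W)} = ⊕_{r<0, s<0} gl^{r,s}`, computed from the bigrading `I` of `(F,W)`. -/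
def Lambda {V : Type*} [AddCommGroup V] [Module ℂ V]
    (I : ℤ → ℤ → Submodule ℂ V) : Submodule ℂ (Module.End ℂ V) :=
  ⨆ rs : ℤ × ℤ, ⨆ _ : rs.1 < 0 ∧ rs.2 < 0, glrs I rs.1 rs.2

/-- The exponential of an endomorphism of a finite-dimensional space, given as the
finite sum `Σ_{n ≤ dim V} α^n / n!`; it agrees with the analytic exponential whenever
`α` is nilpotent (as is every element of `Λ_{(F,W)}`). -/
def expNil {V : Type*} [AddCommGroup V] [Module ℂ V] [FiniteDimensional ℂ V]
    (α : Module.End ℂ V) : Module.End ℂ V :=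
  ∑ n ∈ Finset.range (Module.finrank ℂ V + 1), ((n.factorial : ℂ))⁻¹ • α ^ n

/-! The axioms of a Deligne bigrading already force `F` to induce a pure Hodge structure of
weight `k` on `Gr^W_k`, so it suffices to show that `g · I` is a Deligne bigrading of `(gF, W)`.
Directness and the formulas for `gF` and `W` are transported by `g` once `g` preserves `W`;
only the conjugation condition needs an argument. For real `g` it is immediate. For `g = exp λ`
with `λ ∈ Λ`, `g - 1` maps `I^{p,q}` into `L^{p,q} = ⊕_{r<p, s<q} I^{r,s}`, so the automorphism
`g` maps `W_k` and `I^{p,q} ⊕ L^{p,q}` into, hence onto, themselves; conjugation maps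
`g I^{p,q} ⊆ I^{p,q} ⊕ L^{p,q}` into `I^{q,p} ⊕ L^{q,p} = g (I^{q,p} ⊕ L^{q,p})`. -/

section CompleteLattice

variable {α ι : Type*} [CompleteLattice α]

theorem le_biSup_prod {κ : Type*} (f : ι → κ → α) {P : ι × κ → Prop} {a : ι} {b : κ}
    (h : P (a, b)) : f a b ≤ ⨆ x : ι × κ, ⨆ _ : P x, f x.1 x.2 :=
  le_iSup₂_of_le (f := fun x (_ : P x) => f x.1 x.2) (a, b) h le_rfl

theorem iSupIndep.biSup_inf_biSup [IsModularLattice α] [IsCompactlyGenerated α] {f : ι → α}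
    (hf : iSupIndep f) (s t : Set ι) :
    (⨆ i ∈ s, f i) ⊓ (⨆ i ∈ t, f i) = ⨆ i ∈ s ∩ t, f i := by
  have hsplit : (⨆ i ∈ s, f i) = (⨆ i ∈ s ∩ t, f i) ⊔ ⨆ i ∈ s \ t, f i := by
    rw [← iSup_union, Set.inter_union_sdiff]
  rw [hsplit, sup_inf_assoc_of_le _ (biSup_mono fun _ h => h.2),
    (hf.disjoint_biSup_biSup Set.disjoint_sdiff_left).eq_bot, sup_bot_eq]

end CompleteLattice

namespace Submodule

variable {R M : Type*} [Ring R] [AddCommGroup M] [Module R M] {N X Y : Submodule R M}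

theorem map_mkQ_eq_map_mkQ_iff : X.map N.mkQ = Y.map N.mkQ ↔ N ⊔ X = N ⊔ Y := by
  rw [← (comap_injective_of_surjective N.mkQ_surjective).eq_iff, comap_map_mkQ, comap_map_mkQ]

theorem map_mkQ_inf_map_mkQ_eq_bot_iff :
    X.map N.mkQ ⊓ Y.map N.mkQ = ⊥ ↔ (N ⊔ X) ⊓ (N ⊔ Y) ≤ N := by
  rw [← (comap_injective_of_surjective N.mkQ_surjective).eq_iff, comap_inf, comap_map_mkQ,
    comap_map_mkQ, comap_bot, ker_mkQ]
  exact ⟨le_of_eq, fun h => le_antisymm h (le_inf le_sup_left le_sup_left)⟩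

end Submodule

namespace Conjugation

variable {V : Type*} [AddCommGroup V] [Module ℂ V] (c : Conjugation V)

theorem submap_eq_map (S : Submodule ℂ V) : c.submap S = S.map c.toFun := rfl

theorem injective : Function.Injective c.toFun :=
  Function.LeftInverse.injective c.invol

theorem map_map_self (S : Submodule ℂ V) : (S.map c.toFun).map c.toFun = S := by
  ext v
  refine ⟨?_, fun hv => ⟨c.toFun v, ⟨v, hv, rfl⟩, c.invol v⟩⟩
  rintro ⟨_, ⟨w, hw, rfl⟩, rfl⟩
  rwa [c.invol]

end Conjugation

theorem Module.End.map_le_sup_map_sub_one {R M : Type*} [Ring R] [AddCommGroup M] [Module R M]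
    (f : Module.End R M) (S : Submodule R M) : S.map f ≤ S ⊔ S.map (f - 1) :=
  calc S.map f = S.map (1 + (f - 1)) := by rw [add_sub_cancel]
    _ ≤ S.map 1 ⊔ S.map (f - 1) := Submodule.map_add_le _ _ _
    _ = S ⊔ S.map (f - 1) := by rw [Module.End.one_eq_id, Submodule.map_id]

theorem LinearEquiv.map_eq_of_map_le {K M : Type*} [DivisionRing K] [AddCommGroup M] [Module K M]
    [FiniteDimensional K M] (g : M ≃ₗ[K] M) {S : Submodule K M} (h : S.map (g : M →ₗ[K] M) ≤ S) :
    S.map (g : M →ₗ[K] M) = S :=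
  Submodule.eq_of_le_of_finrank_le h (g.finrank_map_eq S).ge

section Bigrading

variable {V : Type*} [AddCommGroup V] [Module ℂ V]

def lowerSum (I : ℤ → ℤ → Submodule ℂ V) (a b : ℤ) : Submodule ℂ V :=
  ⨆ rs : ℤ × ℤ, ⨆ _ : rs.1 < a ∧ rs.2 < b, I rs.1 rs.2

theorem lowerSum_le_biSup (I : ℤ → ℤ → Submodule ℂ V) {P : ℤ × ℤ → Prop} {a b : ℤ}
    (hP : ∀ rs : ℤ × ℤ, rs.1 < a → rs.2 < b → P rs) :
    lowerSum I a b ≤ ⨆ rs : ℤ × ℤ, ⨆ _ : P rs, I rs.1 rs.2 :=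
  biSup_mono fun rs h => hP rs h.1 h.2

namespace IsDeligneBigrading

variable {c : Conjugation V} {F W : ℤ → Submodule ℂ V} {I : ℤ → ℤ → Submodule ℂ V}

theorem iSupIndep (hI : IsDeligneBigrading c F W I) :
    iSupIndep fun pq : ℤ × ℤ => I pq.1 pq.2 :=
  (DirectSum.isInternal_submodule_iff_iSupIndep_and_iSup_eq_top _).mp hI.internal |>.1

theorem biSup_le_W (hI : IsDeligneBigrading c F W I) {P : ℤ × ℤ → Prop} {k : ℤ}
    (hP : ∀ pq : ℤ × ℤ, P pq → pq.1 + pq.2 ≤ k) :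
    ⨆ pq : ℤ × ℤ, ⨆ _ : P pq, I pq.1 pq.2 ≤ W k :=
  (hI.hW k).symm ▸ biSup_mono hP

theorem W_le_biSup (hI : IsDeligneBigrading c F W I) {P : ℤ × ℤ → Prop} {k : ℤ}
    (hP : ∀ pq : ℤ × ℤ, pq.1 + pq.2 ≤ k → P pq) :
    W k ≤ ⨆ pq : ℤ × ℤ, ⨆ _ : P pq, I pq.1 pq.2 :=
  (hI.hW k).symm ▸ biSup_mono hP

theorem I_le_W (hI : IsDeligneBigrading c F W I) {a b k : ℤ} (h : a + b ≤ k) : I a b ≤ W k :=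
  (hI.hW k).symm ▸ le_biSup_prod I (P := fun pq => pq.1 + pq.2 ≤ k) h

theorem I_le_F (hI : IsDeligneBigrading c F W I) {a b p : ℤ} (h : p ≤ a) : I a b ≤ F p :=
  (hI.hF p).symm ▸ le_biSup_prod I (P := fun pq => p ≤ pq.1) h

theorem lowerSum_le_W (hI : IsDeligneBigrading c F W I) {a b k : ℤ} (h : a + b ≤ k + 2) :
    lowerSum I a b ≤ W k :=
  hI.biSup_le_W fun _ hrs => by omega

theorem map_conj_I_le (hI : IsDeligneBigrading c F W I) (p q : ℤ) :
    (I p q).map c.toFun ≤ I q p ⊔ lowerSum I q p :=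
  Submodule.map_le_iff_le_comap.mpr (hI.conj_cond p q)

theorem map_conj_lowerSum_le (hI : IsDeligneBigrading c F W I) (p q : ℤ) :
    (lowerSum I p q).map c.toFun ≤ lowerSum I q p := by
  simp only [lowerSum, Submodule.map_iSup]
  refine iSup₂_le fun rs hrs => (hI.map_conj_I_le rs.1 rs.2).trans (sup_le ?_ ?_)
  · exact le_biSup_prod I (P := fun pq => pq.1 < q ∧ pq.2 < p) hrs.symm
  · exact lowerSum_le_biSup I fun _ h₁ h₂ => ⟨h₁.trans hrs.2, h₂.trans hrs.1⟩

theorem map_conj_W_le (hI : IsDeligneBigrading c F W I) (k : ℤ) :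
    (W k).map c.toFun ≤ W k := by
  conv_lhs => rw [hI.hW k]
  simp only [Submodule.map_iSup]
  exact iSup₂_le fun pq hpq => (hI.map_conj_I_le pq.1 pq.2).trans
    (sup_le (hI.I_le_W (by omega)) (hI.lowerSum_le_W (by omega)))

theorem map_conj_W (hI : IsDeligneBigrading c F W I) (k : ℤ) : (W k).map c.toFun = W k :=
  le_antisymm (hI.map_conj_W_le k)
    ((c.map_map_self (W k)).symm.le.trans (Submodule.map_mono (hI.map_conj_W_le k)))

theorem F_inf_W (hI : IsDeligneBigrading c F W I) (p k : ℤ) :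
    F p ⊓ W k = ⨆ pq : ℤ × ℤ, ⨆ _ : p ≤ pq.1 ∧ pq.1 + pq.2 ≤ k, I pq.1 pq.2 := by
  rw [hI.hF, hI.hW]
  exact hI.iSupIndep.biSup_inf_biSup {pq | p ≤ pq.1} {pq | pq.1 + pq.2 ≤ k}

theorem graded_sup (hI : IsDeligneBigrading c F W I) (k p : ℤ) :
    ((F p ⊓ W k).map (W (k-1)).mkQ) ⊔ ((c.submap (F (k - p + 1)) ⊓ W k).map (W (k-1)).mkQ)
      = (W k).map (W (k-1)).mkQ := by
  rw [← Submodule.map_sup, Submodule.map_mkQ_eq_map_mkQ_iff, Conjugation.submap_eq_map]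
  refine le_antisymm (sup_le_sup_left (sup_le inf_le_right inf_le_right) _)
    (sup_le le_sup_left ((hI.hW k).le.trans (iSup₂_le fun ⟨a, b⟩ hab => ?_)))
  by_cases hpa : p ≤ a
  · exact le_sup_of_le_right (le_sup_of_le_left (le_inf (hI.I_le_F hpa) (hI.I_le_W hab)))
  by_cases hab' : a + b ≤ k - 1
  · exact le_sup_of_le_left (hI.I_le_W hab')
  -- `a + b = k` and `a < p`: `I^{a,b}` is conjugate to `I^{b,a} ⊆ F^{k-p+1}` modulo `W_{k-2}`
  calc I a b = ((I a b).map c.toFun).map c.toFun := (c.map_map_self _).symm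
    _ ≤ (I b a ⊔ lowerSum I b a).map c.toFun := Submodule.map_mono (hI.map_conj_I_le a b)
    _ = (I b a).map c.toFun ⊔ (lowerSum I b a).map c.toFun := Submodule.map_sup _ _ _
    _ ≤ _ := by
      refine sup_le (le_sup_of_le_right (le_sup_of_le_right (le_inf ?_ ?_)))
        (le_sup_of_le_left ((hI.map_conj_lowerSum_le b a).trans (hI.lowerSum_le_W (by omega))))
      · exact Submodule.map_mono (hI.I_le_F (by omega))
      · exact (Submodule.map_mono (hI.I_le_W (by omega))).trans (hI.map_conj_W_le k)

theorem graded_inf (hI : IsDeligneBigrading c F W I) (k p : ℤ) :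
    ((F p ⊓ W k).map (W (k-1)).mkQ) ⊓ ((c.submap (F (k - p + 1)) ⊓ W k).map (W (k-1)).mkQ)
      = ⊥ := by
  rw [Submodule.map_mkQ_inf_map_mkQ_eq_bot_iff, Conjugation.submap_eq_map]
  -- modulo `W_{k-1}`, `F^p` involves only `I^{a,b}` with `a ≥ p`, the conjugate of `F^{k-p+1}`
  -- only those with `a < p`
  set s₁ : Set (ℤ × ℤ) := {pq | pq.1 + pq.2 ≤ k - 1 ∨ p ≤ pq.1}
  set s₂ : Set (ℤ × ℤ) := {pq | pq.1 + pq.2 ≤ k - 1 ∨ pq.1 < p}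
  have hX : W (k-1) ⊔ (F p ⊓ W k) ≤ ⨆ pq ∈ s₁, I pq.1 pq.2 :=
    sup_le (hI.W_le_biSup fun _ => Or.inl)
      (inf_le_left.trans ((hI.hF p).le.trans (biSup_mono fun _ => Or.inr)))
  have hY : W (k-1) ⊔ ((F (k - p + 1)).map c.toFun ⊓ W k) ≤ ⨆ pq ∈ s₂, I pq.1 pq.2 := by
    refine sup_le (hI.W_le_biSup fun _ => Or.inl) ?_
    rw [← hI.map_conj_W k, ← Submodule.map_inf _ c.injective, hI.F_inf_W]
    simp only [Submodule.map_iSup]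
    refine iSup₂_le fun ⟨a, b⟩ hab => (hI.map_conj_I_le a b).trans (sup_le ?_ ?_)
    · exact le_biSup_prod I (P := (· ∈ s₂)) (Or.inr (by omega))
    · exact lowerSum_le_biSup I fun _ _ _ => Or.inl (by omega)
  calc _ ≤ (⨆ pq ∈ s₁, I pq.1 pq.2) ⊓ ⨆ pq ∈ s₂, I pq.1 pq.2 := inf_le_inf hX hY
    _ = ⨆ pq ∈ s₁ ∩ s₂, I pq.1 pq.2 := hI.iSupIndep.biSup_inf_biSup s₁ s₂
    _ ≤ W (k-1) := hI.biSup_le_W fun _ ⟨h₁, h₂⟩ => by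
      rcases h₁ with h₁ | h₁ <;> rcases h₂ with h₂ | h₂ <;> omega

end IsDeligneBigrading

theorem IsDeligneBigrading.map {c : Conjugation V} {F W : ℤ → Submodule ℂ V}
    {I : ℤ → ℤ → Submodule ℂ V} (hI : IsDeligneBigrading c F W I) (g : V ≃ₗ[ℂ] V)
    (hW : ∀ k, (W k).map (g : V →ₗ[ℂ] V) = W k)
    (hconj : ∀ p q, ((I p q).map (g : V →ₗ[ℂ] V)).map c.toFun ≤
      (I q p ⊔ lowerSum I q p).map (g : V →ₗ[ℂ] V)) :
    IsDeligneBigrading c (fun p => (F p).map (g : V →ₗ[ℂ] V)) W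
      (fun p q => (I p q).map (g : V →ₗ[ℂ] V)) where
  internal := by
    obtain ⟨hind, htop⟩ :=
      (DirectSum.isInternal_submodule_iff_iSupIndep_and_iSup_eq_top _).mp hI.internal
    refine (DirectSum.isInternal_submodule_iff_iSupIndep_and_iSup_eq_top _).mpr
      ⟨hind.map_orderIso (Submodule.orderIsoMapComap g), ?_⟩
    rw [← Submodule.map_iSup, htop, Submodule.map_top, LinearEquiv.range]
  hF p := by
    rw [hI.hF p]
    simp only [Submodule.map_iSup]
  hW k := by
    rw [← hW k, hI.hW k]
    simp only [Submodule.map_iSup]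
  conj_cond p q := by
    have h := hconj p q
    rw [Submodule.map_sup, lowerSum] at h
    simp only [Submodule.map_iSup] at h
    exact Submodule.map_le_iff_le_comap.mp h

theorem IsMHS.map_of_isDeligneBigrading {c : Conjugation V} {F W : ℤ → Submodule ℂ V}
    (h : IsMHS c F W) (g : V ≃ₗ[ℂ] V) {J : ℤ → ℤ → Submodule ℂ V}
    (hJ : IsDeligneBigrading c (fun p => (F p).map (g : V →ₗ[ℂ] V)) W J) :
    IsMHS c (fun p => (F p).map (g : V →ₗ[ℂ] V)) W where
  antitone_F _ _ hpq := Submodule.map_mono (h.antitone_F hpq)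
  exists_F_top := by
    obtain ⟨p, hp⟩ := h.exists_F_top
    exact ⟨p, by rw [hp, Submodule.map_top, LinearEquiv.range]⟩
  exists_F_bot := by
    obtain ⟨p, hp⟩ := h.exists_F_bot
    exact ⟨p, by rw [hp, Submodule.map_bot]⟩
  monotone_W := h.monotone_W
  exists_W_bot := h.exists_W_bot
  exists_W_top := h.exists_W_top
  real_W := h.real_W
  graded_sup := hJ.graded_sup
  graded_inf := hJ.graded_inf

def lowering (I : ℤ → ℤ → Submodule ℂ V) : Submodule ℂ (Module.End ℂ V) where
  carrier := {α | ∀ p q, (I p q).map α ≤ lowerSum I p q}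
  add_mem' hα hβ p q := (Submodule.map_add_le _ _ _).trans (sup_le (hα p q) (hβ p q))
  zero_mem' p q := by simp
  smul_mem' t α hα p q := (Submodule.map_smul_le_map _ _ _).trans (hα p q)

section Lowering

variable {I : ℤ → ℤ → Submodule ℂ V} {α β : Module.End ℂ V}

theorem map_biSup_le_of_mem_lowering (hα : α ∈ lowering I) {P : ℤ × ℤ → Prop}
    (hP : ∀ pq rs : ℤ × ℤ, P pq → rs.1 < pq.1 → rs.2 < pq.2 → P rs) :
    (⨆ pq : ℤ × ℤ, ⨆ _ : P pq, I pq.1 pq.2).map α ≤ ⨆ pq : ℤ × ℤ, ⨆ _ : P pq, I pq.1 pq.2 := by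
  simp only [Submodule.map_iSup]
  exact iSup₂_le fun pq hpq => (hα pq.1 pq.2).trans (lowerSum_le_biSup I (hP pq · hpq))

theorem map_lowerSum_le_of_mem_lowering (hα : α ∈ lowering I) (p q : ℤ) :
    (lowerSum I p q).map α ≤ lowerSum I p q :=
  map_biSup_le_of_mem_lowering hα fun _ _ h h₁ h₂ => ⟨h₁.trans h.1, h₂.trans h.2⟩

theorem mul_mem_lowering (hα : α ∈ lowering I) (hβ : β ∈ lowering I) : α * β ∈ lowering I :=
  fun p q => by
    rw [Module.End.mul_eq_comp, Submodule.map_comp]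
    exact (Submodule.map_mono (hβ p q)).trans (map_lowerSum_le_of_mem_lowering hα p q)

theorem pow_succ_mem_lowering (hα : α ∈ lowering I) (n : ℕ) : α ^ (n + 1) ∈ lowering I := by
  induction n with
  | zero => simpa using hα
  | succ n ih => exact pow_succ α (n + 1) ▸ mul_mem_lowering ih hα

theorem Lambda_le_lowering (I : ℤ → ℤ → Submodule ℂ V) : Lambda I ≤ lowering I :=
  iSup₂_le fun rs hrs α hα p q => Submodule.map_le_iff_le_comap.mpr fun v hv =>
    le_biSup_prod I (P := fun pq => pq.1 < p ∧ pq.2 < q) (by omega) (hα p q v hv)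

theorem expNil_sub_one_mem_lowering [FiniteDimensional ℂ V] (hα : α ∈ lowering I) :
    expNil α - 1 ∈ lowering I := by
  rw [expNil, Finset.sum_range_succ', pow_zero, Nat.factorial_zero, Nat.cast_one, inv_one,
    one_smul, add_sub_cancel_right]
  exact Submodule.sum_mem _ fun n _ => Submodule.smul_mem _ _ (pow_succ_mem_lowering hα n)

end Lowering

namespace IsDeligneBigrading

variable {c : Conjugation V} {F W : ℤ → Submodule ℂ V} {I : ℤ → ℤ → Submodule ℂ V}

theorem map_conj_map_le_of_commute (hI : IsDeligneBigrading c F W I) (g : V ≃ₗ[ℂ] V)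
    (hcomm : ∀ v, g (c.toFun v) = c.toFun (g v)) (p q : ℤ) :
    ((I p q).map (g : V →ₗ[ℂ] V)).map c.toFun ≤ (I q p ⊔ lowerSum I q p).map (g : V →ₗ[ℂ] V) := by
  rintro _ ⟨_, ⟨v, hv, rfl⟩, rfl⟩
  rw [LinearEquiv.coe_coe, ← hcomm]
  exact Submodule.mem_map_of_mem (hI.conj_cond p q v hv)

variable [FiniteDimensional ℂ V] {g : V ≃ₗ[ℂ] V}

theorem map_W_eq_of_sub_one_mem_lowering (hI : IsDeligneBigrading c F W I)
    (hg : (g : V →ₗ[ℂ] V) - 1 ∈ lowering I) (k : ℤ) : (W k).map (g : V →ₗ[ℂ] V) = W k := by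
  rw [hI.hW k]
  exact g.map_eq_of_map_le ((Module.End.map_le_sup_map_sub_one _ _).trans
    (sup_le le_rfl (map_biSup_le_of_mem_lowering hg fun _ _ _ _ _ => by omega)))

theorem map_conj_map_le_of_sub_one_mem_lowering (hI : IsDeligneBigrading c F W I)
    (hg : (g : V →ₗ[ℂ] V) - 1 ∈ lowering I) (p q : ℤ) :
    ((I p q).map (g : V →ₗ[ℂ] V)).map c.toFun ≤ (I q p ⊔ lowerSum I q p).map (g : V →ₗ[ℂ] V) := by
  have hmap_le : ∀ a b, (I a b).map (g : V →ₗ[ℂ] V) ≤ I a b ⊔ lowerSum I a b := fun a b =>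
    (Module.End.map_le_sup_map_sub_one _ _).trans (sup_le_sup_left (hg a b) _)
  have hstable : (I q p ⊔ lowerSum I q p).map (g : V →ₗ[ℂ] V) = I q p ⊔ lowerSum I q p := by
    refine g.map_eq_of_map_le ((Module.End.map_le_sup_map_sub_one _ _).trans (sup_le le_rfl ?_))
    rw [Submodule.map_sup]
    exact sup_le ((hg q p).trans le_sup_right)
      ((map_lowerSum_le_of_mem_lowering hg q p).trans le_sup_right)
  rw [hstable]
  calc ((I p q).map (g : V →ₗ[ℂ] V)).map c.toFun
      ≤ (I p q ⊔ lowerSum I p q).map c.toFun := Submodule.map_mono (hmap_le p q)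
    _ = (I p q).map c.toFun ⊔ (lowerSum I p q).map c.toFun := Submodule.map_sup _ _ _
    _ ≤ I q p ⊔ lowerSum I q p :=
      sup_le (hI.map_conj_I_le p q) ((hI.map_conj_lowerSum_le p q).trans le_sup_right)

end IsDeligneBigrading

end Bigrading

/-- **Equivariance of the Deligne bigrading.** If `g ∈ GL(V)` either (i) is real and
preserves `W`, or (ii) is `exp λ` for some `λ ∈ Λ_{(F,W)}`, then `(gF, W)` is again a
mixed Hodge structure and its Deligne bigrading is `g · I^{p,q}_{(F,W)}`. -/
theorem deligne_bigrading_equivariant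
    {V : Type*} [AddCommGroup V] [Module ℂ V] [FiniteDimensional ℂ V]
    (c : Conjugation V) (F W : ℤ → Submodule ℂ V) (h : IsMHS c F W)
    (I : ℤ → ℤ → Submodule ℂ V) (hI : IsDeligneBigrading c F W I)
    (g : V ≃ₗ[ℂ] V)
    (hg : ((∀ v, g (c.toFun v) = c.toFun (g v)) ∧
            ∀ k, (W k).map (g : V →ₗ[ℂ] V) = W k) ∨
          (∃ l : Module.End ℂ V, l ∈ Lambda I ∧ (g : V →ₗ[ℂ] V) = expNil l)) :
    IsMHS c (fun p => (F p).map (g : V →ₗ[ℂ] V)) W ∧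
    IsDeligneBigrading c (fun p => (F p).map (g : V →ₗ[ℂ] V)) W
      (fun p q => (I p q).map (g : V →ₗ[ℂ] V)) := by
  have hJ : IsDeligneBigrading c (fun p => (F p).map (g : V →ₗ[ℂ] V)) W
      (fun p q => (I p q).map (g : V →ₗ[ℂ] V)) := by
    rcases hg with ⟨hcomm, hW⟩ | ⟨l, hl, hgl⟩
    · exact hI.map g hW (hI.map_conj_map_le_of_commute g hcomm)
    · have hg₁ : (g : V →ₗ[ℂ] V) - 1 ∈ lowering I :=
        hgl ▸ expNil_sub_one_mem_lowering (Lambda_le_lowering I hl)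
      exact hI.map g (hI.map_W_eq_of_sub_one_mem_lowering hg₁)
        (hI.map_conj_map_le_of_sub_one_mem_lowering hg₁)
  exact ⟨h.map_of_isDeligneBigrading g hJ, hJ⟩
end
end

section
/- Let (F,W) be a mixed Hodge structure on V whose weight filtration satisfies W_k = V and W_{k−2} = 0 for some integer k (i.e., only the graded pieces of weights k and k−1 are nonzero). Then (F,W) is split over ℝ, i.e., its Deligne bigrading satisfies conj(I^{p,q}) = I^{q,p} for all p, q. -/
open Complex

noncomputable section

namespace Conjugation

variable {V : Type*} [AddCommGroup V] [Module ℂ V] (c : Conjugation V)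

lemma submap_mono {S T : Submodule ℂ V} (h : S ≤ T) : c.submap S ≤ c.submap T := by
  rintro _ ⟨x, hx, rfl⟩
  exact ⟨x, h hx, rfl⟩

lemma submap_submap (S : Submodule ℂ V) : c.submap (c.submap S) = S := by
  ext v
  constructor
  · rintro ⟨_, ⟨x, hx, rfl⟩, rfl⟩
    rwa [c.invol]
  · exact fun hv => ⟨c.toFun v, ⟨v, hv, rfl⟩, c.invol v⟩

lemma submap_bot : c.submap ⊥ = ⊥ := by
  ext v
  simp [submap]

lemma submap_eq_of_le {S T : Submodule ℂ V} (hST : c.submap S ≤ T) (hTS : c.submap T ≤ S) :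
    c.submap S = T :=
  le_antisymm hST (by simpa only [submap_submap] using c.submap_mono hTS)

end Conjugation

namespace IsDeligneBigrading

variable {V : Type*} [AddCommGroup V] [Module ℂ V] {c : Conjugation V}
  {F W : ℤ → Submodule ℂ V} {I : ℤ → ℤ → Submodule ℂ V}

lemma le_W (hI : IsDeligneBigrading c F W I) {p q k : ℤ} (hpq : p + q ≤ k) : I p q ≤ W k := by
  rw [hI.hW]
  exact le_iSup₂_of_le (p, q) hpq le_rfl

lemma eq_bot_of_W_eq_bot (hI : IsDeligneBigrading c F W I) {p q k : ℤ} (hk : W k = ⊥)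
    (hpq : p + q ≤ k) : I p q = ⊥ :=
  eq_bot_iff.mpr (hk ▸ hI.le_W hpq)

/-- The pieces `I^{r,s}` with `r + s ≤ k` already span `W k = ⊤`, so by independence every
other piece is zero. -/
lemma eq_bot_of_W_eq_top (hI : IsDeligneBigrading c F W I) {p q k : ℤ} (hk : W k = ⊤)
    (hpq : k < p + q) : I p q = ⊥ := by
  have hspan : (⨆ rs : ℤ × ℤ, ⨆ _ : rs ≠ (p, q), I rs.1 rs.2) = ⊤ := by
    rw [eq_top_iff, ← hk, hI.hW]
    refine iSup₂_le fun rs hrs => le_iSup₂_of_le rs ?_ le_rfl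
    rintro rfl
    omega
  simpa only [hspan, disjoint_top] using hI.internal.submodule_iSupIndep (p, q)

/-- Every piece of the correction term `⊕_{r<q, s<p} I^{r,s}` has weight `r + s ≤ p + q - 2 ≤ k`. -/
lemma submap_le_of_W_eq_bot (hI : IsDeligneBigrading c F W I) {p q k : ℤ} (hk : W k = ⊥)
    (hpq : p + q ≤ k + 2) : c.submap (I p q) ≤ I q p := by
  have hcorr : (⨆ rs : ℤ × ℤ, ⨆ _ : rs.1 < q ∧ rs.2 < p, I rs.1 rs.2) = ⊥ :=
    eq_bot_iff.mpr <| iSup₂_le fun rs hrs =>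
      (hI.eq_bot_of_W_eq_bot hk (by omega)).le
  rintro _ ⟨v, hv, rfl⟩
  simpa only [hcorr, sup_bot_eq] using hI.conj_cond p q v hv

lemma submap_le_of_W_eq_top_of_W_eq_bot (hI : IsDeligneBigrading c F W I) {k : ℤ}
    (htop : W k = ⊤) (hbot : W (k - 2) = ⊥) (p q : ℤ) : c.submap (I p q) ≤ I q p := by
  rcases le_or_gt (p + q) k with hpq | hpq
  · exact hI.submap_le_of_W_eq_bot hbot (by omega)
  · simp only [hI.eq_bot_of_W_eq_top htop hpq, c.submap_bot, bot_le]

end IsDeligneBigrading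

theorem short_weight_filtration_split_general
    {V : Type*} [AddCommGroup V] [Module ℂ V]
    (c : Conjugation V) (F W : ℤ → Submodule ℂ V)
    (I : ℤ → ℤ → Submodule ℂ V) (hI : IsDeligneBigrading c F W I)
    (k : ℤ) (htop : W k = ⊤) (hbot : W (k - 2) = ⊥) :
    ∀ p q : ℤ, c.submap (I p q) = I q p := fun p q =>
  c.submap_eq_of_le (hI.submap_le_of_W_eq_top_of_W_eq_bot htop hbot p q)
    (hI.submap_le_of_W_eq_top_of_W_eq_bot htop hbot q p)

/-- A mixed Hodge structure whose weight filtration has only two (adjacent)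
nontrivial graded pieces is split over `ℝ`. -/
theorem short_weight_filtration_split
    {V : Type*} [AddCommGroup V] [Module ℂ V] [FiniteDimensional ℂ V]
    (c : Conjugation V) (F W : ℤ → Submodule ℂ V) (h : IsMHS c F W)
    (I : ℤ → ℤ → Submodule ℂ V) (hI : IsDeligneBigrading c F W I)
    (k : ℤ) (htop : W k = ⊤) (hbot : W (k - 2) = ⊥) :
    ∀ p q : ℤ, c.submap (I p q) = I q p :=
  short_weight_filtration_split_general c F W I hI k htop hbot
end
end
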